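/- For the Moutard-type operator L = Dx² − Dy + c, suppose P = 4 Dx³ + 6c Dx + p₀ satisfies the Lax-type intertwining identity P(L(u)) = L(P(u)) for all smooth u. Then the coefficient p₀ satisfies the system (p₀)ₓ = 3(c_y + cₓₓ) and (p₀)_y = 3 cₓ_y − 6 c cₓ − cₓₓₓ, and consequently c satisfies the Boussinesq equation c_yy = −(c² + cₓₓ/3)ₓₓ. -/

import Mathlib

noncomputable section
open Real

/-- Smooth functions on the plane, as plain functions `ℝ × ℝ → ℝ`. -/
abbrev F := (ℝ × ℝ) → ℝ

/-- Partial derivative in `x`. -/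
noncomputable def Dx (f : F) : F := fun p => fderiv ℝ f p (1, 0)

/-- Partial derivative in `y`. -/
noncomputable def Dy (f : F) : F := fun p => fderiv ℝ f p (0, 1)

/-- The parabolic operator `L = Dx² + a·Dx + b·Dy + c`. -/
noncomputable def Lop (a b c : F) (u : F) : F :=
  fun p => Dx (Dx u) p + a p * Dx u p + b p * Dy u p + c p * u p

section AuxLemmas

lemma smooth_D (v : ℝ × ℝ) {f : F} (hf : ContDiff ℝ (⊤ : ℕ∞) f) :
    ContDiff ℝ (⊤ : ℕ∞) fun p => fderiv ℝ f p v := by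
  exact (ContinuousLinearMap.apply ℝ ℝ v).contDiff.comp (hf.fderiv_right (by simp))

lemma Dx_smooth {f : F} (hf : ContDiff ℝ (⊤ : ℕ∞) f) : ContDiff ℝ (⊤ : ℕ∞) (Dx f) := smooth_D _ hf
lemma Dy_smooth {f : F} (hf : ContDiff ℝ (⊤ : ℕ∞) f) : ContDiff ℝ (⊤ : ℕ∞) (Dy f) := smooth_D _ hf

lemma D_comm {f : F} (hf : ContDiff ℝ (⊤ : ℕ∞) f) (v w : ℝ × ℝ) (p : ℝ × ℝ) :
    fderiv ℝ (fun q => fderiv ℝ f q v) p w = fderiv ℝ (fun q => fderiv ℝ f q w) p v := by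
  have hsymm : IsSymmSndFDerivAt ℝ f p := hf.contDiffAt.isSymmSndFDerivAt (by rw [minSmoothness_of_isRCLikeNormedField]; exact WithTop.coe_le_coe.mpr le_top)
  have hd : DifferentiableAt ℝ (fderiv ℝ f) p :=
    ((hf.fderiv_right (m := (⊤ : ℕ∞)) (by simp)).differentiable (by simp)) p
  have h1 : ∀ u : ℝ × ℝ, fderiv ℝ (fun q => fderiv ℝ f q u) p
      = (fderiv ℝ (fderiv ℝ f) p).flip u := by
    intro u
    have := fderiv_clm_apply (c := fderiv ℝ f) (u := fun _ => u) hd (differentiableAt_const u)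
    simpa using this
  rw [h1, h1]
  exact hsymm w v

lemma D_const (v : ℝ × ℝ) (a : ℝ) : (fun p : ℝ × ℝ => fderiv ℝ (fun _ => a) p v) = fun _ => 0 := by
  funext p; simp

lemma Dx_const (a : ℝ) : Dx (fun _ => a) = fun _ => 0 := D_const _ a
lemma Dy_const (a : ℝ) : Dy (fun _ => a) = fun _ => 0 := D_const _ a

lemma D_fst (v : ℝ × ℝ) : (fun p : ℝ × ℝ => fderiv ℝ (fun q : ℝ × ℝ => q.1) p v) = fun _ => v.1 := by
  funext p
  rw [(hasFDerivAt_fst (p := p)).fderiv]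
  rfl

lemma Dx_fst : Dx (fun q : ℝ × ℝ => q.1) = fun _ => 1 := D_fst _
lemma Dy_fst : Dy (fun q : ℝ × ℝ => q.1) = fun _ => 0 := D_fst _

lemma D_add (v : ℝ × ℝ) {f g : F} (hf : Differentiable ℝ f) (hg : Differentiable ℝ g) :
    (fun p => fderiv ℝ (fun q => f q + g q) p v)
      = fun p => fderiv ℝ f p v + fderiv ℝ g p v := by
  funext p; rw [fderiv_fun_add (hf p) (hg p)]; simp

lemma D_sub (v : ℝ × ℝ) {f g : F} (hf : Differentiable ℝ f) (hg : Differentiable ℝ g) :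
    (fun p => fderiv ℝ (fun q => f q - g q) p v)
      = fun p => fderiv ℝ f p v - fderiv ℝ g p v := by
  funext p; rw [fderiv_fun_sub (hf p) (hg p)]; simp

lemma D_mul (v : ℝ × ℝ) {f g : F} (hf : Differentiable ℝ f) (hg : Differentiable ℝ g) :
    (fun p => fderiv ℝ (fun q => f q * g q) p v)
      = fun p => fderiv ℝ f p v * g p + f p * fderiv ℝ g p v := by
  funext p; rw [fderiv_fun_mul (hf p) (hg p)]; simp; ring

lemma D_const_mul (v : ℝ × ℝ) (a : ℝ) {f : F} (hf : Differentiable ℝ f) :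
    (fun p => fderiv ℝ (fun q => a * f q) p v) = fun p => a * fderiv ℝ f p v := by
  funext p; rw [fderiv_const_mul (hf p)]; simp

lemma D_div_const (v : ℝ × ℝ) (a : ℝ) {f : F} (hf : Differentiable ℝ f) :
    (fun p => fderiv ℝ (fun q => f q / a) p v) = fun p => fderiv ℝ f p v / a := by
  funext p
  simp only [div_eq_mul_inv]
  rw [fderiv_mul_const (hf p)]
  simp [mul_comm]

lemma Dx_add {f g : F} (hf : Differentiable ℝ f) (hg : Differentiable ℝ g) :
    Dx (fun q => f q + g q) = fun p => Dx f p + Dx g p := D_add _ hf hg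
lemma Dy_add {f g : F} (hf : Differentiable ℝ f) (hg : Differentiable ℝ g) :
    Dy (fun q => f q + g q) = fun p => Dy f p + Dy g p := D_add _ hf hg
lemma Dx_sub {f g : F} (hf : Differentiable ℝ f) (hg : Differentiable ℝ g) :
    Dx (fun q => f q - g q) = fun p => Dx f p - Dx g p := D_sub _ hf hg
lemma Dx_mul {f g : F} (hf : Differentiable ℝ f) (hg : Differentiable ℝ g) :
    Dx (fun q => f q * g q) = fun p => Dx f p * g p + f p * Dx g p := D_mul _ hf hg
lemma Dy_mul {f g : F} (hf : Differentiable ℝ f) (hg : Differentiable ℝ g) :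
    Dy (fun q => f q * g q) = fun p => Dy f p * g p + f p * Dy g p := D_mul _ hf hg
lemma Dx_cmul (a : ℝ) {f : F} (hf : Differentiable ℝ f) :
    Dx (fun q => a * f q) = fun p => a * Dx f p := D_const_mul _ a hf
lemma Dy_cmul (a : ℝ) {f : F} (hf : Differentiable ℝ f) :
    Dy (fun q => a * f q) = fun p => a * Dy f p := D_const_mul _ a hf
lemma Dx_divc (a : ℝ) {f : F} (hf : Differentiable ℝ f) :
    Dx (fun q => f q / a) = fun p => Dx f p / a := D_div_const _ a hf

end AuxLemmas

theorem lax_pair_implies_boussinesq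
    (c p₀ : F) (hc : ContDiff ℝ (⊤ : ℕ∞) c) (hp₀ : ContDiff ℝ (⊤ : ℕ∞) p₀)
    (hlax : ∀ u : F, ContDiff ℝ (⊤ : ℕ∞) u →
      ∀ p, 4 * Dx (Dx (Dx (fun q => Dx (Dx u) q - Dy u q + c q * u q))) p
          + 6 * c p * Dx (fun q => Dx (Dx u) q - Dy u q + c q * u q) p
          + p₀ p * (Dx (Dx u) p - Dy u p + c p * u p) =
        Dx (Dx (fun q => 4 * Dx (Dx (Dx u)) q + 6 * c q * Dx u q + p₀ q * u q)) p
          - Dy (fun q => 4 * Dx (Dx (Dx u)) q + 6 * c q * Dx u q + p₀ q * u q) p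
          + c p * (4 * Dx (Dx (Dx u)) p + 6 * c p * Dx u p + p₀ p * u p)) :
    (∀ p, Dx p₀ p = 3 * (Dy c p + Dx (Dx c) p)) ∧
    (∀ p, Dy p₀ p = 3 * Dx (Dy c) p - 6 * c p * Dx c p - Dx (Dx (Dx c)) p) ∧
    (∀ p, Dy (Dy c) p = -Dx (Dx (fun q => c q ^ 2 + Dx (Dx c) q / 3)) p) := by
  have hc' : Differentiable ℝ c := hc.differentiable (by simp)
  have hp' : Differentiable ℝ p₀ := hp₀.differentiable (by simp)
  have dcx : Differentiable ℝ (Dx c) := (Dx_smooth hc).differentiable (by simp)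
  have dcy : Differentiable ℝ (Dy c) := (Dy_smooth hc).differentiable (by simp)
  have dcxx : Differentiable ℝ (Dx (Dx c)) := (Dx_smooth (Dx_smooth hc)).differentiable (by simp)
  have dcxxx : Differentiable ℝ (Dx (Dx (Dx c))) :=
    (Dx_smooth (Dx_smooth (Dx_smooth hc))).differentiable (by simp)
  have dcxy : Differentiable ℝ (Dx (Dy c)) := (Dx_smooth (Dy_smooth hc)).differentiable (by simp)
  have dpx : Differentiable ℝ (Dx p₀) := (Dx_smooth hp₀).differentiable (by simp)
  have dpy : Differentiable ℝ (Dy p₀) := (Dy_smooth hp₀).differentiable (by simp)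
  -- Equation from u = 1
  have h1 : ∀ p, 4 * Dx (Dx (Dx c)) p + 6 * c p * Dx c p + p₀ p * c p
      = Dx (Dx p₀) p - Dy p₀ p + c p * p₀ p := by
    have h := hlax (fun _ => 1) contDiff_const
    simpa only [Dx_const, Dy_const, mul_one, mul_zero, zero_mul, sub_zero, sub_self,
      zero_add, add_zero, zero_sub, neg_zero] using h
  -- derivative computations for u = x
  have A1 : Dx (fun q => c q * q.1) = fun p => Dx c p * p.1 + c p := by
    simp only [Dx_mul hc' differentiable_fst, Dx_fst, mul_one]
  have A2 : Dx (fun p : ℝ × ℝ => Dx c p * p.1 + c p)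
      = fun p => Dx (Dx c) p * p.1 + 2 * Dx c p := by
    simp only [Dx_add (dcx.fun_mul differentiable_fst) hc', Dx_mul dcx differentiable_fst,
      Dx_fst, mul_one]
    funext p; ring
  have A3 : Dx (fun p : ℝ × ℝ => Dx (Dx c) p * p.1 + 2 * Dx c p)
      = fun p => Dx (Dx (Dx c)) p * p.1 + 3 * Dx (Dx c) p := by
    simp only [Dx_add (dcxx.fun_mul differentiable_fst) (dcx.const_mul 2),
      Dx_mul dcxx differentiable_fst, Dx_cmul 2 dcx, Dx_fst, mul_one]
    funext p; ring
  have B1 : Dx (fun q => 6 * c q + p₀ q * q.1)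
      = fun p => 6 * Dx c p + (Dx p₀ p * p.1 + p₀ p) := by
    simp only [Dx_add (hc'.const_mul 6) (hp'.fun_mul differentiable_fst), Dx_cmul 6 hc',
      Dx_mul hp' differentiable_fst, Dx_fst, mul_one]
  have B2 : Dx (fun p : ℝ × ℝ => 6 * Dx c p + (Dx p₀ p * p.1 + p₀ p))
      = fun p => 6 * Dx (Dx c) p + (Dx (Dx p₀) p * p.1 + 2 * Dx p₀ p) := by
    simp only [Dx_add (dcx.const_mul 6) ((dpx.fun_mul differentiable_fst).fun_add hp'),
      Dx_cmul 6 dcx, Dx_add (dpx.fun_mul differentiable_fst) hp',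
      Dx_mul dpx differentiable_fst, Dx_fst, mul_one]
    funext p; ring
  have B3 : Dy (fun q => 6 * c q + p₀ q * q.1)
      = fun p => 6 * Dy c p + Dy p₀ p * p.1 := by
    simp only [Dy_add (hc'.const_mul 6) (hp'.fun_mul differentiable_fst), Dy_cmul 6 hc',
      Dy_mul hp' differentiable_fst, Dy_fst, mul_zero, add_zero]
  -- Equation from u = x
  have h2 : ∀ p : ℝ × ℝ,
      4 * (Dx (Dx (Dx c)) p * p.1 + 3 * Dx (Dx c) p)
        + 6 * c p * (Dx c p * p.1 + c p) + p₀ p * (c p * p.1)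
      = (6 * Dx (Dx c) p + (Dx (Dx p₀) p * p.1 + 2 * Dx p₀ p))
        - (6 * Dy c p + Dy p₀ p * p.1)
        + c p * (6 * c p + p₀ p * p.1) := by
    have h := hlax (fun q => q.1) contDiff_fst
    simpa only [Dx_fst, Dy_fst, Dx_const, Dy_const, mul_one, mul_zero, zero_mul, sub_zero,
      sub_self, zero_add, add_zero, A1, A2, A3, B1, B2, B3] using h
  -- First conclusion
  have g1 : ∀ p, Dx p₀ p = 3 * (Dy c p + Dx (Dx c) p) := by
    intro p
    linear_combination (p.1 * h1 p - h2 p) / 2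
  have e1 : Dx p₀ = fun p => 3 * (Dy c p + Dx (Dx c) p) := funext g1
  -- Second conclusion
  have E1x : Dx (Dx p₀) = fun p => 3 * (Dx (Dy c) p + Dx (Dx (Dx c)) p) := by
    rw [e1]
    simp only [Dx_cmul 3 (dcy.fun_add dcxx), Dx_add dcy dcxx]
  have g2 : ∀ p, Dy p₀ p = 3 * Dx (Dy c) p - 6 * c p * Dx c p - Dx (Dx (Dx c)) p := by
    intro p
    have h3 := congrFun E1x p
    linear_combination h1 p + h3
  have e2 : Dy p₀ = fun p => 3 * Dx (Dy c) p - 6 * c p * Dx c p - Dx (Dx (Dx c)) p := funext g2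
  -- Third conclusion
  have E1y : Dy (Dx p₀) = fun p => 3 * (Dy (Dy c) p + Dy (Dx (Dx c)) p) := by
    rw [e1]
    simp only [Dy_cmul 3 (dcy.fun_add dcxx), Dy_add dcy dcxx]
  have E2x : Dx (Dy p₀)
      = fun p => 3 * Dx (Dx (Dy c)) p
          - (6 * Dx c p * Dx c p + 6 * c p * Dx (Dx c) p) - Dx (Dx (Dx (Dx c))) p := by
    rw [e2]
    simp only [Dx_sub ((dcxy.const_mul 3).fun_sub ((hc'.const_mul 6).fun_mul dcx)) dcxxx,
      Dx_sub (dcxy.const_mul 3) ((hc'.const_mul 6).fun_mul dcx),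
      Dx_cmul 3 dcxy, Dx_mul (hc'.const_mul 6) dcx, Dx_cmul 6 hc']
  have sp : Dy (Dx p₀) = Dx (Dy p₀) := funext fun p => D_comm hp₀ (1, 0) (0, 1) p
  have sc1 : Dy (Dx c) = Dx (Dy c) := funext fun p => D_comm hc (1, 0) (0, 1) p
  have sc2 : ∀ p, Dy (Dx (Dx c)) p = Dx (Dx (Dy c)) p := by
    intro p
    have := D_comm (Dx_smooth hc) (1, 0) (0, 1) p
    rw [show (fun q => fderiv ℝ (Dx c) q (1, 0)) = Dx (Dx c) from rfl,
      show (fun q => fderiv ℝ (Dx c) q (0, 1)) = Dy (Dx c) from rfl] at this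
    rw [show fderiv ℝ (Dx (Dx c)) p (0, 1) = Dy (Dx (Dx c)) p from rfl,
      show fderiv ℝ (Dy (Dx c)) p (1, 0) = Dx (Dy (Dx c)) p from rfl] at this
    rw [this, sc1]
  have hdiv1 : Differentiable ℝ (fun q => Dx (Dx c) q / 3) := by
    simpa [div_eq_mul_inv] using dcxx.mul_const (3:ℝ)⁻¹
  have hdiv2 : Differentiable ℝ (fun q => Dx (Dx (Dx c)) q / 3) := by
    simpa [div_eq_mul_inv] using dcxxx.mul_const (3:ℝ)⁻¹
  have hpow : (fun q => c q ^ 2 + Dx (Dx c) q / 3)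
      = fun q => c q * c q + Dx (Dx c) q / 3 := by
    funext q; ring
  have r1 : Dx (fun q => c q * c q + Dx (Dx c) q / 3)
      = fun p => (Dx c p * c p + c p * Dx c p) + Dx (Dx (Dx c)) p / 3 := by
    simp only [Dx_add (hc'.fun_mul hc') hdiv1, Dx_mul hc' hc', Dx_divc 3 dcxx]
  have r2 : Dx (fun p : ℝ × ℝ => (Dx c p * c p + c p * Dx c p) + Dx (Dx (Dx c)) p / 3)
      = fun p => ((Dx (Dx c) p * c p + Dx c p * Dx c p)
          + (Dx c p * Dx c p + c p * Dx (Dx c) p)) + Dx (Dx (Dx (Dx c))) p / 3 := by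
    simp only [Dx_add ((dcx.fun_mul hc').fun_add (hc'.fun_mul dcx)) hdiv2,
      Dx_add (dcx.fun_mul hc') (hc'.fun_mul dcx), Dx_mul dcx hc', Dx_mul hc' dcx,
      Dx_divc 3 dcxxx]
  have g3 : ∀ p, Dy (Dy c) p = -Dx (Dx (fun q => c q ^ 2 + Dx (Dx c) q / 3)) p := by
    intro p
    rw [hpow, r1, r2]
    have hyx := congrFun E1y p
    have hxy := congrFun E2x p
    have hsp := congrFun sp p
    have hsc := sc2 p
    linear_combination (hxy - hyx + hsp) / 3 - hsc
  exact ⟨g1, g2, g3⟩
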